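/- Let M ∈ ℝ^{4n×4n} be a JRS-symmetric matrix. Then there exists an orthogonally JRS-symplectic matrix W ∈ ℝ^{4n×4n} such that Wᵀ M W = T is a real JRS-Schur form, i.e., T has the block partitioning T = [[T₀,T₂,T₁,T₃],[−T₂,T₀,T₃,−T₁],[−T₁,−T₃,T₀,T₂],[−T₃,T₁,−T₂,T₀]], where T₀ ∈ ℝ^{n×n} is upper quasi-triangular (upper Hessenberg with no two consecutive nonzero subdiagonal entries) and T₁, T₂, T₃ ∈ ℝ^{n×n} are upper triangular. -/

import Mathlib

open Matrix Quaternion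
open scoped Kronecker Quaternion

noncomputable section

/-- The 4×4 coefficient matrix of `J`. -/
def Jb : Matrix (Fin 4) (Fin 4) ℝ := !![0,0,-1,0; 0,0,0,-1; 1,0,0,0; 0,1,0,0]
/-- The 4×4 coefficient matrix of `R`. -/
def Rb : Matrix (Fin 4) (Fin 4) ℝ := !![0,-1,0,0; 1,0,0,0; 0,0,0,1; 0,0,-1,0]
/-- The 4×4 coefficient matrix of `S`. -/
def Sb : Matrix (Fin 4) (Fin 4) ℝ := !![0,0,0,-1; 0,0,1,0; 0,-1,0,0; 1,0,0,0]

/-- `J_n = [[0,0,−I_n,0],[0,0,0,−I_n],[I_n,0,0,0],[0,I_n,0,0]]`. -/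
def JJ (n : ℕ) : Matrix (Fin 4 × Fin n) (Fin 4 × Fin n) ℝ :=
  Jb ⊗ₖ (1 : Matrix (Fin n) (Fin n) ℝ)
/-- `R_n = [[0,−I_n,0,0],[I_n,0,0,0],[0,0,0,I_n],[0,0,−I_n,0]]`. -/
def RRm (n : ℕ) : Matrix (Fin 4 × Fin n) (Fin 4 × Fin n) ℝ :=
  Rb ⊗ₖ (1 : Matrix (Fin n) (Fin n) ℝ)
/-- `S_n = [[0,0,0,−I_n],[0,0,I_n,0],[0,−I_n,0,0],[I_n,0,0,0]]`. -/
def SSm (n : ℕ) : Matrix (Fin 4 × Fin n) (Fin 4 × Fin n) ℝ :=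
  Sb ⊗ₖ (1 : Matrix (Fin n) (Fin n) ℝ)

/-- A real 4m×4n matrix `M` is JRS-symmetric if `J_m M J_nᵀ = M`,
`R_m M R_nᵀ = M` and `S_m M S_nᵀ = M`. -/
def JRSSymmetric {m n : ℕ} (M : Matrix (Fin 4 × Fin m) (Fin 4 × Fin n) ℝ) : Prop :=
  JJ m * M * (JJ n)ᵀ = M ∧ RRm m * M * (RRm n)ᵀ = M ∧ SSm m * M * (SSm n)ᵀ = M

/-- A real 4m×4n matrix `O` is JRS-symplectic if `O J_n Oᵀ = J_m`,
`O R_n Oᵀ = R_m` and `O S_n Oᵀ = S_m`. -/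
def JRSSymplectic {m n : ℕ} (O : Matrix (Fin 4 × Fin m) (Fin 4 × Fin n) ℝ) : Prop :=
  O * JJ n * Oᵀ = JJ m ∧ O * RRm n * Oᵀ = RRm m ∧ O * SSm n * Oᵀ = SSm m

/-- A real 4n×4n matrix is orthogonally JRS-symplectic if it is orthogonal
and JRS-symplectic. -/
def OrthoJRSSymplectic {n : ℕ} (W : Matrix (Fin 4 × Fin n) (Fin 4 × Fin n) ℝ) : Prop :=
  Wᵀ * W = 1 ∧ JRSSymplectic W

/-- The 4m×4n block matrix
`[[Q₀,Q₂,Q₁,Q₃],[−Q₂,Q₀,Q₃,−Q₁],[−Q₁,−Q₃,Q₀,Q₂],[−Q₃,Q₁,−Q₂,Q₀]]`. -/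
def upsilonBlocks {m n : ℕ} (Q0 Q1 Q2 Q3 : Matrix (Fin m) (Fin n) ℝ) :
    Matrix (Fin 4 × Fin m) (Fin 4 × Fin n) ℝ := fun p q =>
  !![Q0 p.2 q.2, Q2 p.2 q.2, Q1 p.2 q.2, Q3 p.2 q.2;
     -(Q2 p.2 q.2), Q0 p.2 q.2, Q3 p.2 q.2, -(Q1 p.2 q.2);
     -(Q1 p.2 q.2), -(Q3 p.2 q.2), Q0 p.2 q.2, Q2 p.2 q.2;
     -(Q3 p.2 q.2), Q1 p.2 q.2, -(Q2 p.2 q.2), Q0 p.2 q.2] p.1 q.1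

/-- The real counterpart `Υ_Q` of a quaternion matrix `Q`. -/
def Upsilon {m n : ℕ} (Q : Matrix (Fin m) (Fin n) ℍ[ℝ]) :
    Matrix (Fin 4 × Fin m) (Fin 4 × Fin n) ℝ :=
  upsilonBlocks (fun i j => (Q i j).re) (fun i j => (Q i j).imI)
    (fun i j => (Q i j).imJ) (fun i j => (Q i j).imK)

/-- Upper Hessenberg: zero below the first subdiagonal. -/
def UpperHessenbergM {n : ℕ} (A : Matrix (Fin n) (Fin n) ℝ) : Prop :=
  ∀ i j : Fin n, (j : ℕ) + 1 < (i : ℕ) → A i j = 0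

/-- Upper triangular: zero below the diagonal. -/
def UpperTriangularM {m n : ℕ} (A : Matrix (Fin m) (Fin n) ℝ) : Prop :=
  ∀ (i : Fin m) (j : Fin n), (j : ℕ) < (i : ℕ) → A i j = 0

/-- Strictly upper triangular: zero on and below the diagonal. -/
def StrictlyUpperTriangularM {m n : ℕ} (A : Matrix (Fin m) (Fin n) ℝ) : Prop :=
  ∀ (i : Fin m) (j : Fin n), (j : ℕ) ≤ (i : ℕ) → A i j = 0

/-- Tridiagonal: zero outside the three central diagonals. -/
def TridiagonalM {n : ℕ} (A : Matrix (Fin n) (Fin n) ℝ) : Prop :=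
  ∀ i j : Fin n, ((i : ℕ) + 1 < (j : ℕ) ∨ (j : ℕ) + 1 < (i : ℕ)) → A i j = 0

/-!
A JRS-symmetric matrix is exactly the real counterpart `Υ_Q` of a quaternion matrix `Q`: each
4×4 block is fixed by conjugation with the three coefficient matrices of `J`, `R`, `S`, and those
blocks are the real matrices of quaternions. `Υ` is multiplicative and turns conjugate transposes
into transposes, so for a unitary quaternion matrix `U` the matrix `Υ_U` is orthogonal; being also
JRS-symmetric, it commutes with `J_n`, `R_n`, `S_n` and hence is JRS-symplectic. Everything thus
reduces to a quaternion Schur decomposition `Uᴴ Q U = T` with `T` upper triangular, whose four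
real components are then the blocks `T₀, …, T₃` (here `T₀` is even upper triangular).

The Schur decomposition is proved as over `ℂ`: `ℍⁿ` is a complex vector space under right
multiplication by `ℂ ⊂ ℍ`, for which `v ↦ Q v` is linear, so `Q` has a right eigenvector
`Q w = w q`; a Householder reflection completes a unit eigenvector to a unitary matrix, and
induction on `n` finishes.
-/

open scoped RightActions

def quatBlock : ℍ[ℝ] →+* Matrix (Fin 4) (Fin 4) ℝ where
  toFun q := !![q.re, q.imJ, q.imI, q.imK;
     -q.imJ, q.re, q.imK, -q.imI;
     -q.imI, -q.imK, q.re, q.imJ;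
     -q.imK, q.imI, -q.imJ, q.re]
  map_one' := by ext a b; fin_cases a <;> fin_cases b <;> simp
  map_mul' p q := by
    ext a b; fin_cases a <;> fin_cases b <;> simp [mul_apply, Fin.sum_univ_four] <;> ring
  map_zero' := by ext a b; fin_cases a <;> fin_cases b <;> simp
  map_add' p q := by ext a b; fin_cases a <;> fin_cases b <;> simp <;> ring

lemma quatBlock_star (q : ℍ[ℝ]) : quatBlock (star q) = (quatBlock q)ᵀ := by
  ext a b; fin_cases a <;> fin_cases b <;> simp [quatBlock]

def IsJRSFixed (X : Matrix (Fin 4) (Fin 4) ℝ) : Prop :=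
  Jb * X * Jbᵀ = X ∧ Rb * X * Rbᵀ = X ∧ Sb * X * Sbᵀ = X

lemma isJRSFixed_iff_exists_quatBlock (X : Matrix (Fin 4) (Fin 4) ℝ) :
    IsJRSFixed X ↔ ∃ q, quatBlock q = X := by
  constructor
  · rintro ⟨hJ, hR, hS⟩
    refine ⟨⟨X 0 0, X 0 2, X 0 1, X 0 3⟩, ?_⟩
    rw [← Matrix.ext_iff] at hJ hR hS
    simp only [Fin.forall_fin_succ, IsEmpty.forall_iff, and_true] at hJ hR hS
    simp [Jb, Rb, Sb, mul_apply, Fin.sum_univ_four] at hJ hR hS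
    ext a b; fin_cases a <;> fin_cases b <;> simp [quatBlock] <;> linarith
  · rintro ⟨q, rfl⟩
    refine ⟨?_, ?_, ?_⟩ <;>
    · ext a b
      fin_cases a <;> fin_cases b <;> simp [Jb, Rb, Sb, quatBlock, mul_apply, Fin.sum_univ_four]

lemma Jb_Rb_Sb_transpose_mul_self : Jbᵀ * Jb = 1 ∧ Rbᵀ * Rb = 1 ∧ Sbᵀ * Sb = 1 := by
  refine ⟨?_, ?_, ?_⟩ <;>
  · ext a b
    fin_cases a <;> fin_cases b <;> simp [Jb, Rb, Sb, mul_apply, Fin.sum_univ_four, one_apply]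

section Blocks

variable {R : Type*} {k l m n p k' l' : Type*}

def blockAt (X : Matrix (k × m) (l × n) R) (i : m) (j : n) : Matrix k l R :=
  of fun a b => X (a, i) (b, j)

lemma ext_blockAt {X Y : Matrix (k × m) (l × n) R} (h : ∀ i j, blockAt X i j = blockAt Y i j) :
    X = Y := by
  ext ⟨a, i⟩ ⟨b, j⟩
  exact congrFun₂ (h i j) a b

lemma blockAt_transpose (X : Matrix (k × m) (l × n) R) (i : n) (j : m) :
    blockAt Xᵀ i j = (blockAt X j i)ᵀ := rfl

lemma blockAt_one [Zero R] [One R] [DecidableEq k] [DecidableEq m] (i j : m) :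
    blockAt (1 : Matrix (k × m) (k × m) R) i j = if i = j then 1 else 0 := by
  ext a b
  by_cases h : i = j <;> simp [blockAt, one_apply, h]

lemma blockAt_mul [NonUnitalNonAssocSemiring R] [Fintype l] [Fintype n]
    (X : Matrix (k × m) (l × n) R) (Y : Matrix (l × n) (k' × p) R) (i : m) (j : p) :
    blockAt (X * Y) i j = ∑ c, blockAt X i c * blockAt Y c j := by
  ext a b
  simp only [blockAt, mul_apply, Fintype.sum_prod_type, of_apply, Matrix.sum_apply]
  exact Finset.sum_comm

lemma blockAt_kronecker_one_mul_mul_transpose [CommSemiring R] [Fintype k] [Fintype l]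
    [Fintype m] [Fintype n] [DecidableEq m] [DecidableEq n]
    (C : Matrix k' k R) (D : Matrix l' l R) (X : Matrix (k × m) (l × n) R) (i : m) (j : n) :
    blockAt ((C ⊗ₖ (1 : Matrix m m R)) * X * (D ⊗ₖ (1 : Matrix n n R))ᵀ) i j
      = C * blockAt X i j * Dᵀ := by
  ext a b
  simp [blockAt, mul_apply, kroneckerMap_apply, one_apply, Fintype.sum_prod_type, Finset.sum_mul]

lemma kronecker_one_transpose_mul_self [CommSemiring R] [Fintype k] [Fintype m] [DecidableEq k]
    [DecidableEq m] {C : Matrix k k R} (hC : Cᵀ * C = 1) :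
    (C ⊗ₖ (1 : Matrix m m R))ᵀ * (C ⊗ₖ (1 : Matrix m m R)) = 1 := by
  rw [← kroneckerMap_transpose, transpose_one, ← mul_kronecker_mul, hC, mul_one, one_kronecker_one]

end Blocks

section Upsilon

variable {m n p : ℕ}

lemma blockAt_upsilon (Q : Matrix (Fin m) (Fin n) ℍ[ℝ]) (i : Fin m) (j : Fin n) :
    blockAt (Upsilon Q) i j = quatBlock (Q i j) := rfl

lemma upsilon_mul (P : Matrix (Fin m) (Fin n) ℍ[ℝ]) (Q : Matrix (Fin n) (Fin p) ℍ[ℝ]) :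
    Upsilon (P * Q) = Upsilon P * Upsilon Q :=
  ext_blockAt fun i j => by simp only [blockAt_mul, blockAt_upsilon, mul_apply, map_sum, map_mul]

lemma upsilon_one : Upsilon (1 : Matrix (Fin n) (Fin n) ℍ[ℝ]) = 1 :=
  ext_blockAt fun i j => by rw [blockAt_upsilon, blockAt_one, one_apply, apply_ite quatBlock,
    map_one, map_zero]

lemma upsilon_transpose (Q : Matrix (Fin m) (Fin n) ℍ[ℝ]) : (Upsilon Q)ᵀ = Upsilon Qᴴ :=
  ext_blockAt fun i j => by
    rw [blockAt_transpose, blockAt_upsilon, blockAt_upsilon, conjTranspose_apply, quatBlock_star]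

lemma jrsSymmetric_iff_forall_isJRSFixed (M : Matrix (Fin 4 × Fin m) (Fin 4 × Fin n) ℝ) :
    JRSSymmetric M ↔ ∀ i j, IsJRSFixed (blockAt M i j) := by
  simp only [JRSSymmetric, IsJRSFixed, JJ, RRm, SSm, ← blockAt_kronecker_one_mul_mul_transpose]
  constructor
  · rintro ⟨hJ, hR, hS⟩ i j
    exact ⟨by rw [hJ], by rw [hR], by rw [hS]⟩
  · intro h
    exact ⟨ext_blockAt fun i j => (h i j).1, ext_blockAt fun i j => (h i j).2.1,
      ext_blockAt fun i j => (h i j).2.2⟩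

lemma jrsSymmetric_iff_exists_upsilon (M : Matrix (Fin 4 × Fin m) (Fin 4 × Fin n) ℝ) :
    JRSSymmetric M ↔ ∃ Q, Upsilon Q = M := by
  simp only [jrsSymmetric_iff_forall_isJRSFixed, isJRSFixed_iff_exists_quatBlock]
  constructor
  · intro h
    choose Q hQ using h
    exact ⟨Q, ext_blockAt hQ⟩
  · rintro ⟨Q, rfl⟩ i j
    exact ⟨Q i j, rfl⟩

end Upsilon

lemma mul_mul_transpose_eq_of_conj_eq {R n : Type*} [CommSemiring R] [Fintype n] [DecidableEq n]
    {W X : Matrix n n R} (hX : Xᵀ * X = 1) (hW : W * Wᵀ = 1) (hXW : X * W * Xᵀ = W) :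
    W * X * Wᵀ = X := by
  have hcomm : W * X = X * W := by conv_lhs => rw [← hXW, mul_assoc, hX, mul_one]
  rw [hcomm, mul_assoc, hW, mul_one]

lemma orthoJRSSymplectic_of_jrsSymmetric {n : ℕ} {W : Matrix (Fin 4 × Fin n) (Fin 4 × Fin n) ℝ}
    (hW : Wᵀ * W = 1) (hsym : JRSSymmetric W) : OrthoJRSSymplectic W := by
  have hW' : W * Wᵀ = 1 := mul_eq_one_comm.mp hW
  obtain ⟨hJ, hR, hS⟩ := Jb_Rb_Sb_transpose_mul_self
  exact ⟨hW, mul_mul_transpose_eq_of_conj_eq (kronecker_one_transpose_mul_self hJ) hW' hsym.1,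
    mul_mul_transpose_eq_of_conj_eq (kronecker_one_transpose_mul_self hR) hW' hsym.2.1,
    mul_mul_transpose_eq_of_conj_eq (kronecker_one_transpose_mul_self hS) hW' hsym.2.2⟩

instance Quaternion.instStarModuleReal : StarModule ℝ ℍ[ℝ] :=
  ⟨fun r a => by rw [Quaternion.star_smul, star_trivial r]⟩

lemma Quaternion.star_dotProduct_self {ι : Type*} [Fintype ι] (v : ι → ℍ[ℝ]) :
    star v ⬝ᵥ v = ((∑ i, normSq (v i) : ℝ) : ℍ[ℝ]) := by
  simp [dotProduct, Quaternion.star_mul_self, ← Quaternion.algebraMap_def]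

lemma Quaternion.exists_unit_star_mul_eq_neg_norm (a : ℍ[ℝ]) :
    ∃ β : ℍ[ℝ], star β * β = 1 ∧ star β * a = ((-‖a‖ : ℝ) : ℍ[ℝ]) := by
  rcases eq_or_ne a 0 with rfl | ha
  · exact ⟨1, by simp, by simp⟩
  have hna : ‖a‖ ≠ 0 := norm_ne_zero_iff.mpr ha
  refine ⟨-(‖a‖⁻¹ • a), ?_, ?_⟩ <;>
    simp only [star_neg, neg_mul, mul_neg, neg_neg, smul_neg, StarModule.star_smul, star_trivial,
      smul_mul_assoc, mul_smul_comm, Quaternion.star_mul_self, Quaternion.normSq_eq_norm_mul_self,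
      Quaternion.smul_coe]
  · rw [← Quaternion.coe_one, Quaternion.coe_inj]
    field_simp
  · rw [← Quaternion.coe_neg, Quaternion.coe_inj]
    field_simp

section ComplexStructure

abbrev rightComplexModule : Module ℂ ℍ[ℝ] :=
  Module.compHom ℍ[ℝ] ((Quaternion.ofComplex : ℂ →+* ℍ[ℝ]).toOpposite fun z w => by
    simp only [Commute, SemiconjBy, ← map_mul, mul_comm])

attribute [local instance] rightComplexModule

lemma complex_smul_eq_mul (z : ℂ) (q : ℍ[ℝ]) : z • q = q * z := rfl

lemma finite_rightComplexModule : Module.Finite ℂ ℍ[ℝ] :=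
  have : IsScalarTower ℝ ℂ ℍ[ℝ] := ⟨fun r z q => by
    simp only [complex_smul_eq_mul]
    ext <;> simp <;> ring⟩
  .of_restrictScalars_finite ℝ ℂ ℍ[ℝ]

attribute [local instance] finite_rightComplexModule

variable {ι : Type*} [Fintype ι]

lemma Matrix.exists_right_eigenvector [Nonempty ι] (Q : Matrix ι ι ℍ[ℝ]) :
    ∃ v ≠ 0, ∃ q : ℍ[ℝ], Q *ᵥ v = v <• q := by
  let f : Module.End ℂ (ι → ℍ[ℝ]) :=
    { toFun := (Q *ᵥ ·)
      map_add' := mulVec_add Q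
      map_smul' := fun z v => by
        funext i
        simp [mulVec, dotProduct, complex_smul_eq_mul, Finset.sum_mul, mul_assoc] }
  obtain ⟨c, hc⟩ := Module.End.exists_eigenvalue f
  obtain ⟨v, hv⟩ := hc.exists_hasEigenvector
  exact ⟨v, hv.2, c, hv.apply_eq_smul⟩

end ComplexStructure

lemma Matrix.exists_unit_right_eigenvector {ι : Type*} [Fintype ι] [Nonempty ι]
    (Q : Matrix ι ι ℍ[ℝ]) : ∃ w, star w ⬝ᵥ w = 1 ∧ ∃ q : ℍ[ℝ], Q *ᵥ w = w <• q := by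
  obtain ⟨v, hv, q, hQv⟩ := Q.exists_right_eigenvector
  have hpos : 0 < ∑ i, normSq (v i) := by
    obtain ⟨i, hi⟩ := Function.ne_iff.mp hv
    exact Finset.sum_pos' (fun i _ => normSq_nonneg)
      ⟨i, Finset.mem_univ i, normSq_nonneg.lt_of_ne (normSq_ne_zero.mpr hi).symm⟩
  set s := √(∑ i, normSq (v i))
  have hs : s ≠ 0 := (Real.sqrt_pos.mpr hpos).ne'
  have hs2 : s ^ 2 = ∑ i, normSq (v i) := Real.sq_sqrt hpos.le
  refine ⟨s⁻¹ • v, ?_, q, ?_⟩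
  · rw [StarModule.star_smul, star_trivial, smul_dotProduct, dotProduct_smul,
      Quaternion.star_dotProduct_self, ← hs2, smul_smul, Quaternion.smul_coe,
      show s⁻¹ * s⁻¹ * s ^ 2 = 1 by field_simp, Quaternion.coe_one]
  · rw [mulVec_smul, hQv, smul_comm]

section Householder

variable {ι : Type*} [DecidableEq ι]

def householder (u : ι → ℍ[ℝ]) (ρ : ℝ) : Matrix ι ι ℍ[ℝ] :=
  1 - ρ⁻¹ • vecMulVec u (star u)

lemma householder_conjTranspose (u : ι → ℍ[ℝ]) (ρ : ℝ) :
    (householder u ρ)ᴴ = householder u ρ := by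
  simp [householder, conjTranspose_smul]

lemma householder_mul_self [Fintype ι] {u : ι → ℍ[ℝ]} {ρ : ℝ} (hρ : ρ ≠ 0)
    (hu : star u ⬝ᵥ u = ((2 * ρ : ℝ) : ℍ[ℝ])) : householder u ρ * householder u ρ = 1 := by
  have hP : vecMulVec u (star u) * vecMulVec u (star u) = (2 * ρ) • vecMulVec u (star u) := by
    rw [vecMulVec_mul_vecMulVec, hu, ← Quaternion.algebraMap_def, algebraMap_smul, vecMulVec_smul]
  simp only [householder, sub_mul, mul_sub, one_mul, mul_one, smul_mul_smul, hP, smul_smul]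
  rw [show ρ⁻¹ * ρ⁻¹ * (2 * ρ) = ρ⁻¹ + ρ⁻¹ by field_simp; ring, add_smul]
  abel

lemma householder_mulVec [Fintype ι] {u w : ι → ℍ[ℝ]} {ρ : ℝ} (hρ : ρ ≠ 0)
    (huw : star u ⬝ᵥ w = (ρ : ℍ[ℝ])) :
    householder u ρ *ᵥ w = w - u := by
  rw [householder, sub_mulVec, one_mulVec, smul_mulVec, vecMulVec_mulVec, huw]
  congr 1
  funext i
  simp [Quaternion.mul_coe_eq_smul, smul_smul, inv_mul_cancel₀ hρ]

end Householder

lemma exists_unitary_mulVec_single_eq {ι : Type*} [Fintype ι] [DecidableEq ι]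
    {w : ι → ℍ[ℝ]} (hw : star w ⬝ᵥ w = 1) (i₀ : ι) :
    ∃ U : Matrix ι ι ℍ[ℝ], Uᴴ * U = 1 ∧ U *ᵥ Pi.single i₀ 1 = w := by
  -- `star β * w i₀ ≤ 0` keeps `ρ ≥ 1` and makes the reflection send `w` to `Pi.single i₀ β`;
  -- the diagonal factor below then turns the `i₀`-th column back into `w`.
  obtain ⟨β, hββ, hβw⟩ := (w i₀).exists_unit_star_mul_eq_neg_norm
  have hwβ : star (w i₀) * β = ((-‖w i₀‖ : ℝ) : ℍ[ℝ]) := by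
    simpa [Quaternion.star_coe] using congrArg star hβw
  set ρ := 1 + ‖w i₀‖ with hρ_def
  have hρ : ρ ≠ 0 := by positivity
  set u := w - Pi.single i₀ β
  have huw : star u ⬝ᵥ w = (ρ : ℍ[ℝ]) := by
    rw [star_sub, Pi.star_single, sub_dotProduct, hw, single_dotProduct, hβw,
      ← Quaternion.coe_one, ← Quaternion.coe_sub, Quaternion.coe_inj, hρ_def, sub_neg_eq_add]
  have huu : star u ⬝ᵥ u = ((2 * ρ : ℝ) : ℍ[ℝ]) := by
    rw [dotProduct_sub, huw, dotProduct_single]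
    simp only [u, Pi.star_apply, Pi.sub_apply, star_sub, Pi.single_eq_same, sub_mul, hwβ, hββ]
    rw [← Quaternion.coe_one, ← Quaternion.coe_sub, ← Quaternion.coe_sub, Quaternion.coe_inj,
      hρ_def]
    ring
  have hHH := householder_mul_self hρ huu
  have hHw : householder u ρ *ᵥ w = Pi.single i₀ β := by
    rw [householder_mulVec hρ huw, sub_sub_cancel]
  refine ⟨householder u ρ * diagonal (Function.update 1 i₀ β), ?_, ?_⟩
  · rw [conjTranspose_mul, householder_conjTranspose, mul_assoc, ← mul_assoc (householder u ρ),
      hHH, one_mul, diagonal_conjTranspose, diagonal_mul_diagonal, ← diagonal_one]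
    congr 1
    funext i
    rcases eq_or_ne i i₀ with rfl | hi <;> simp [*]
  · rw [← mulVec_mulVec, diagonal_mulVec_single, Function.update_self, mul_one, ← hHw,
      mulVec_mulVec, hHH, one_mulVec]

section OneBlockDiag

variable {R : Type*} {n : ℕ}

def oneBlockDiag [Zero R] [One R] (V : Matrix (Fin n) (Fin n) R) :
    Matrix (Fin (n + 1)) (Fin (n + 1)) R :=
  of (Fin.cons (Fin.cons 1 0) fun i => Fin.cons 0 (V i))

@[simp] lemma oneBlockDiag_zero_zero [Zero R] [One R] (V : Matrix (Fin n) (Fin n) R) :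
    oneBlockDiag V 0 0 = 1 := rfl
@[simp] lemma oneBlockDiag_zero_succ [Zero R] [One R] (V : Matrix (Fin n) (Fin n) R) (j : Fin n) :
    oneBlockDiag V 0 j.succ = 0 := rfl
@[simp] lemma oneBlockDiag_succ_zero [Zero R] [One R] (V : Matrix (Fin n) (Fin n) R) (i : Fin n) :
    oneBlockDiag V i.succ 0 = 0 := rfl
@[simp] lemma oneBlockDiag_succ_succ [Zero R] [One R] (V : Matrix (Fin n) (Fin n) R)
    (i j : Fin n) : oneBlockDiag V i.succ j.succ = V i j := rfl

lemma oneBlockDiag_conjTranspose [Semiring R] [StarRing R] (V : Matrix (Fin n) (Fin n) R) :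
    (oneBlockDiag V)ᴴ = oneBlockDiag Vᴴ := by
  ext i j
  cases i using Fin.cases <;> cases j using Fin.cases <;> simp

lemma oneBlockDiag_mul [Semiring R] (V W : Matrix (Fin n) (Fin n) R) :
    oneBlockDiag V * oneBlockDiag W = oneBlockDiag (V * W) := by
  ext i j
  cases i using Fin.cases <;> cases j using Fin.cases <;> simp [mul_apply, Fin.sum_univ_succ]

lemma oneBlockDiag_one [Zero R] [One R] : oneBlockDiag (1 : Matrix (Fin n) (Fin n) R) = 1 := by
  ext i j
  cases i using Fin.cases <;> cases j using Fin.cases <;>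
    simp [one_apply, (Fin.succ_ne_zero _).symm]

lemma oneBlockDiag_mul_mul_oneBlockDiag_succ_zero [Semiring R] (V W : Matrix (Fin n) (Fin n) R)
    (A : Matrix (Fin (n + 1)) (Fin (n + 1)) R) (i : Fin n) :
    (oneBlockDiag V * A * oneBlockDiag W) i.succ 0 = (V *ᵥ fun k => A k.succ 0) i := by
  simp [mul_apply, Fin.sum_univ_succ, mulVec, dotProduct]

lemma oneBlockDiag_mul_mul_oneBlockDiag_succ_succ [Semiring R] (V W : Matrix (Fin n) (Fin n) R)
    (A : Matrix (Fin (n + 1)) (Fin (n + 1)) R) (i j : Fin n) :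
    (oneBlockDiag V * A * oneBlockDiag W) i.succ j.succ
      = (V * A.submatrix Fin.succ Fin.succ * W) i j := by
  simp [mul_apply, Fin.sum_univ_succ]

end OneBlockDiag

lemma conj_mulVec_single_of_right_eigenvector {ι : Type*} [Fintype ι] [DecidableEq ι]
    {Q U : Matrix ι ι ℍ[ℝ]} {w : ι → ℍ[ℝ]} {q : ℍ[ℝ]} {i₀ : ι} (hU : Uᴴ * U = 1)
    (hUw : U *ᵥ Pi.single i₀ 1 = w) (hQw : Q *ᵥ w = w <• q) :
    (Uᴴ * Q * U) *ᵥ Pi.single i₀ 1 = Pi.single i₀ q := by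
  rw [← mulVec_mulVec, hUw, ← mulVec_mulVec, hQw, mulVec_smul, ← hUw, mulVec_mulVec, hU,
    one_mulVec, ← Pi.single_smul, op_smul_eq_mul, one_mul]

theorem Matrix.exists_unitary_conj_blockTriangular :
    ∀ {n : ℕ} (Q : Matrix (Fin n) (Fin n) ℍ[ℝ]),
      ∃ U : Matrix (Fin n) (Fin n) ℍ[ℝ], Uᴴ * U = 1 ∧ (Uᴴ * Q * U).BlockTriangular id
  | 0, _ => ⟨1, by simp, fun i => i.elim0⟩
  | n + 1, Q => by
    obtain ⟨w, hw, q, hQw⟩ := Q.exists_unit_right_eigenvector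
    obtain ⟨U, hU, hUw⟩ := exists_unitary_mulVec_single_eq hw 0
    set A := Uᴴ * Q * U
    have hA : (fun k : Fin n => A k.succ 0) = 0 := by
      funext k
      simpa [mulVec_single_one] using
        congrFun (conj_mulVec_single_of_right_eigenvector hU hUw hQw) k.succ
    obtain ⟨V, hV, hT⟩ := exists_unitary_conj_blockTriangular (A.submatrix Fin.succ Fin.succ)
    refine ⟨U * oneBlockDiag V, ?_, ?_⟩
    · rw [conjTranspose_mul, mul_assoc, ← mul_assoc Uᴴ, hU, one_mul, oneBlockDiag_conjTranspose,
        oneBlockDiag_mul, hV, oneBlockDiag_one]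
    · have hconj : (U * oneBlockDiag V)ᴴ * Q * (U * oneBlockDiag V)
          = oneBlockDiag Vᴴ * A * oneBlockDiag V := by
        simp only [A, conjTranspose_mul, oneBlockDiag_conjTranspose, mul_assoc]
      rw [hconj]
      intro i j hij
      cases i using Fin.cases with
      | zero => exact absurd hij (Fin.not_lt_zero _)
      | succ i =>
        cases j using Fin.cases with
        | zero => rw [oneBlockDiag_mul_mul_oneBlockDiag_succ_zero, hA, mulVec_zero, Pi.zero_apply]
        | succ j =>
          rw [oneBlockDiag_mul_mul_oneBlockDiag_succ_succ]
          exact hT (Fin.succ_lt_succ_iff.mp hij)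

lemma upperTriangularM_map {α : Type*} [Zero α] {n : ℕ} {T : Matrix (Fin n) (Fin n) α}
    (hT : T.BlockTriangular id) {f : α → ℝ} (hf : f 0 = 0) : UpperTriangularM (T.map f) :=
  fun _ _ hij => by rw [map_apply, hT hij, hf]

lemma UpperTriangularM.upperHessenbergM {n : ℕ} {A : Matrix (Fin n) (Fin n) ℝ}
    (hA : UpperTriangularM A) : UpperHessenbergM A :=
  fun i j hij => hA i j (by omega)

/-- Real JRS-Schur form: every JRS-symmetric matrix is
orthogonally JRS-symplectically similar to a real JRS-Schur form, i.e. `T₀`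
is upper quasi-triangular and `T₁, T₂, T₃` are upper triangular. -/
theorem jrs_schur_decomposition {n : ℕ}
    (M : Matrix (Fin 4 × Fin n) (Fin 4 × Fin n) ℝ) (hM : JRSSymmetric M) :
    ∃ (W : Matrix (Fin 4 × Fin n) (Fin 4 × Fin n) ℝ)
      (T0 T1 T2 T3 : Matrix (Fin n) (Fin n) ℝ),
      OrthoJRSSymplectic W ∧
      Wᵀ * M * W = upsilonBlocks T0 T1 T2 T3 ∧
      UpperHessenbergM T0 ∧
      (∀ (s : ℕ) (h : s + 2 < n),
        T0 ⟨s + 1, by omega⟩ ⟨s, by omega⟩ = 0 ∨ T0 ⟨s + 2, h⟩ ⟨s + 1, by omega⟩ = 0) ∧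
      UpperTriangularM T1 ∧ UpperTriangularM T2 ∧ UpperTriangularM T3 := by
  obtain ⟨Q, rfl⟩ := (jrsSymmetric_iff_exists_upsilon M).1 hM
  obtain ⟨U, hU, hT⟩ := Q.exists_unitary_conj_blockTriangular
  have hW : (Upsilon U)ᵀ * Upsilon U = 1 := by
    rw [upsilon_transpose, ← upsilon_mul, hU, upsilon_one]
  have hT0 : UpperTriangularM ((Uᴴ * Q * U).map (·.re)) := upperTriangularM_map hT rfl
  refine ⟨Upsilon U, (Uᴴ * Q * U).map (·.re), (Uᴴ * Q * U).map (·.imI),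
    (Uᴴ * Q * U).map (·.imJ), (Uᴴ * Q * U).map (·.imK),
    orthoJRSSymplectic_of_jrsSymmetric hW ((jrsSymmetric_iff_exists_upsilon _).2 ⟨U, rfl⟩),
    ?_, hT0.upperHessenbergM, fun s _ => .inl (hT0 _ _ s.lt_succ_self),
    upperTriangularM_map hT rfl, upperTriangularM_map hT rfl, upperTriangularM_map hT rfl⟩
  rw [upsilon_transpose, ← upsilon_mul, ← upsilon_mul]
  rfl
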